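/- For a subcollection 𝓒 ⊆ 𝓡 of groups, let σ_G(s,t | 𝓒) denote the group Steiner distance between s and t with respect to the groups in 𝓒 (so σ_G(s,t | ∅) = d_G(s,t)). Then for every non-empty 𝓒 ⊆ 𝓡, every s ∈ V, and every r ∈ R: σ_G(s,r | 𝓒) = min over r' ∈ ⋃_{R_i ∈ 𝓒} R_i of [ σ_G(s,r' | 𝓒 \ {R_j ∈ 𝓒 : r' ∈ R_j}) + d_G(r', r) ]. -/

import Mathlib

open SimpleGraph ENNReal

/-- The length (total weight) of a walk: the sum of its edge weights, with multiplicity. -/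
def walkWeight {V : Type*} {G : SimpleGraph V} (w : V → V → ℝ) {u v : V} (p : G.Walk u v) : ℝ :=
  (p.darts.map (fun d => w d.toProd.1 d.toProd.2)).sum

/-- A walk is a group Steiner path w.r.t. the groups `R` if it visits at least one
vertex of every group. -/
def IsGroupSteiner {V : Type*} {G : SimpleGraph V} {k : ℕ} (R : Fin k → Set V) {u v : V}
    (p : G.Walk u v) : Prop :=
  ∀ i, ∃ x ∈ R i, x ∈ p.support

/-- The group Steiner distance: the infimum of the lengths of group Steiner paths
from `s` to `t` (`∞` if there is none). -/
noncomputable def gsDist {V : Type*} (G : SimpleGraph V) (w : V → V → ℝ) {k : ℕ}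
    (R : Fin k → Set V) (s t : V) : ℝ≥0∞ :=
  ⨅ p : {p : G.Walk s t // IsGroupSteiner R p}, ENNReal.ofReal (walkWeight w p.1)

/-- The ordinary shortest-path distance: the infimum of the lengths of walks
from `s` to `t` (`∞` if there is none). -/
noncomputable def spDist {V : Type*} (G : SimpleGraph V) (w : V → V → ℝ) (s t : V) : ℝ≥0∞ :=
  ⨅ p : G.Walk s t, ENNReal.ofReal (walkWeight w p)

/-- The group Steiner distance w.r.t. the subcollection of groups indexed by `C`:
the infimum of the lengths of walks from `s` to `t` visiting every group `R i`, `i ∈ C`. -/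
noncomputable def gsDistOn {V : Type*} (G : SimpleGraph V) (w : V → V → ℝ) {k : ℕ}
    (R : Fin k → Set V) (C : Set (Fin k)) (s t : V) : ℝ≥0∞ :=
  ⨅ p : {p : G.Walk s t // ∀ i ∈ C, ∃ x ∈ R i, x ∈ p.support},
    ENNReal.ofReal (walkWeight w p.1)

/-!
Split any walk from `s` to `r` that meets every group of `𝓒` at the last vertex `r'` it visits
from these groups. Since no group vertex follows `r'`, the part before `r'` still meets every
group of `𝓒` not containing `r'`, and the part after `r'` is an arbitrary walk from `r'` to `r`.
Conversely, any such pair of walks concatenates to a walk meeting every group of `𝓒`.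
Non-negativity of the weights makes the length of the concatenation additive in `ℝ≥0∞`.
-/

section WalkWeight

variable {V : Type*} {G : SimpleGraph V} (w : V → V → ℝ)

lemma walkWeight_nonneg (hw : ∀ u v, 0 ≤ w u v) {u v : V} (p : G.Walk u v) :
    0 ≤ walkWeight w p :=
  List.sum_nonneg fun _ hx => by
    obtain ⟨_, _, rfl⟩ := List.mem_map.1 hx
    exact hw _ _

lemma walkWeight_append {u v x : V} (p : G.Walk u v) (q : G.Walk v x) :
    walkWeight w (p.append q) = walkWeight w p + walkWeight w q := by
  simp [walkWeight, Walk.darts_append]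

end WalkWeight

lemma SimpleGraph.Walk.exists_append_eq_of_last_mem {V : Type*} {G : SimpleGraph V} {S : Set V}
    {u v : V} (p : G.Walk u v) (hp : ∃ x ∈ p.support, x ∈ S) :
    ∃ x ∈ S, ∃ (q₁ : G.Walk u x) (q₂ : G.Walk x v),
      q₁.append q₂ = p ∧ ∀ y ∈ q₂.support, y ∈ S → y = x := by
  induction p with
  | nil =>
    obtain ⟨x, hx, hxS⟩ := hp
    rw [Walk.support_nil, List.mem_singleton] at hx
    subst hx
    exact ⟨_, hxS, Walk.nil, Walk.nil, rfl, fun y hy _ => List.mem_singleton.1 hy⟩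
  | @cons a b c hadj q ih =>
    by_cases hq : ∃ x ∈ q.support, x ∈ S
    · obtain ⟨x, hxS, q₁, q₂, rfl, hlast⟩ := ih hq
      exact ⟨x, hxS, Walk.cons hadj q₁, q₂, rfl, hlast⟩
    · have haS : a ∈ S := by
        obtain ⟨x, hx, hxS⟩ := hp
        rcases List.mem_cons.1 (Walk.support_cons hadj q ▸ hx) with rfl | hx
        · exact hxS
        · exact absurd ⟨x, hx, hxS⟩ hq
      refine ⟨a, haS, Walk.nil, Walk.cons hadj q, rfl, fun y hy hyS => ?_⟩
      rcases List.mem_cons.1 (Walk.support_cons hadj q ▸ hy) with rfl | hy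
      · rfl
      · exact absurd ⟨y, hy, hyS⟩ hq

section GroupSteinerDistance

variable {V : Type*} {G : SimpleGraph V} {w : V → V → ℝ} {k : ℕ} {R : Fin k → Set V}
  {C : Set (Fin k)}

lemma gsDistOn_le_ofReal_walkWeight {s t : V} (p : G.Walk s t)
    (hp : ∀ i ∈ C, ∃ x ∈ R i, x ∈ p.support) :
    gsDistOn G w R C s t ≤ ENNReal.ofReal (walkWeight w p) :=
  iInf_le (fun p : {p : G.Walk s t // ∀ i ∈ C, ∃ x ∈ R i, x ∈ p.support} =>
    ENNReal.ofReal (walkWeight w p.1)) ⟨p, hp⟩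

lemma gsDistOn_le_gsDistOn_add_spDist (s r r' : V) :
    gsDistOn G w R C s r ≤ gsDistOn G w R {j | j ∈ C ∧ r' ∉ R j} s r' + spDist G w r' r := by
  refine ENNReal.le_iInf_add_iInf fun p₁ p₂ => ?_
  have hvisit : ∀ i ∈ C, ∃ x ∈ R i, x ∈ (p₁.1.append p₂).support := by
    intro i hi
    by_cases hri : r' ∈ R i
    · exact ⟨r', hri, (Walk.mem_support_append_iff _ _).2 (Or.inl p₁.1.end_mem_support)⟩
    · obtain ⟨x, hxR, hxs⟩ := p₁.2 i ⟨hi, hri⟩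
      exact ⟨x, hxR, (Walk.mem_support_append_iff _ _).2 (Or.inl hxs)⟩
  calc gsDistOn G w R C s r ≤ ENNReal.ofReal (walkWeight w (p₁.1.append p₂)) :=
        gsDistOn_le_ofReal_walkWeight _ hvisit
    _ ≤ _ := by rw [walkWeight_append]; exact ENNReal.ofReal_add_le

lemma iInf_gsDistOn_add_spDist_le_gsDistOn (hw : ∀ u v, 0 ≤ w u v) (hC : C.Nonempty)
    (s r : V) :
    ⨅ r' ∈ ⋃ i ∈ C, R i, gsDistOn G w R {j | j ∈ C ∧ r' ∉ R j} s r' + spDist G w r' r ≤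
      gsDistOn G w R C s r := by
  refine le_iInf fun ⟨p, hp⟩ => ?_
  have hmeet : ∃ x ∈ p.support, x ∈ ⋃ i ∈ C, R i := by
    obtain ⟨i, hi⟩ := hC
    obtain ⟨x, hxR, hxs⟩ := hp i hi
    exact ⟨x, hxs, Set.mem_biUnion hi hxR⟩
  obtain ⟨r', hr', q₁, q₂, rfl, hlast⟩ := p.exists_append_eq_of_last_mem hmeet
  have hq₁ : ∀ j ∈ {j | j ∈ C ∧ r' ∉ R j}, ∃ x ∈ R j, x ∈ q₁.support := by
    rintro j ⟨hj, hr'j⟩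
    obtain ⟨x, hxR, hxs⟩ := hp j hj
    refine ⟨x, hxR, ?_⟩
    rcases (Walk.mem_support_append_iff _ _).1 hxs with hx | hx
    · exact hx
    · exact absurd (hlast x hx (Set.mem_biUnion hj hxR) ▸ hxR) hr'j
  calc _ ≤ gsDistOn G w R {j | j ∈ C ∧ r' ∉ R j} s r' + spDist G w r' r := iInf₂_le r' hr'
    _ ≤ ENNReal.ofReal (walkWeight w q₁) + ENNReal.ofReal (walkWeight w q₂) :=
        add_le_add (gsDistOn_le_ofReal_walkWeight q₁ hq₁) (iInf_le _ q₂)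
    _ = ENNReal.ofReal (walkWeight w (q₁.append q₂)) := by
        rw [walkWeight_append,
          ENNReal.ofReal_add (walkWeight_nonneg w hw _) (walkWeight_nonneg w hw _)]

end GroupSteinerDistance

theorem stmt_18_general {V : Type*} (G : SimpleGraph V)
    (w : V → V → ℝ) (hw : ∀ u v, 0 ≤ w u v)
    {k : ℕ} (R : Fin k → Set V)
    (C : Set (Fin k)) (hC : C.Nonempty)
    (s : V) (r : V) :
    gsDistOn G w R C s r =
      ⨅ r' ∈ ⋃ i ∈ C, R i,
        gsDistOn G w R {j | j ∈ C ∧ r' ∉ R j} s r' + spDist G w r' r :=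
  le_antisymm (le_iInf₂ fun r' _ => gsDistOn_le_gsDistOn_add_spDist s r r')
    (iInf_gsDistOn_add_spDist_le_gsDistOn hw hC s r)

/-- The dynamic-programming recurrence for group Steiner distances:
for a non-empty subcollection `𝓒` and a required vertex `r`,
`σ(s,r | 𝓒) = min_{r' ∈ ⋃_{R_i ∈ 𝓒} R_i} σ(s,r' | 𝓒 \ {R_j ∈ 𝓒 : r' ∈ R_j}) + d(r',r)`. -/
theorem stmt_18 {V : Type*} [Fintype V] (G : SimpleGraph V) (hconn : G.Connected)
    (w : V → V → ℝ) (hw : ∀ u v, 0 ≤ w u v) (hsymm : ∀ u v, w u v = w v u)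
    {k : ℕ} (R : Fin k → Set V) (hR : ∀ i, (R i).Nonempty)
    (C : Set (Fin k)) (hC : C.Nonempty)
    (s : V) (r : V) (hr : r ∈ ⋃ i, R i) :
    gsDistOn G w R C s r =
      ⨅ r' ∈ ⋃ i ∈ C, R i,
        gsDistOn G w R {j | j ∈ C ∧ r' ∉ R j} s r' + spDist G w r' r :=
  stmt_18_general G w hw R C hC s r
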